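/- Let t, x, s, α ∈ ℂ with Im(t) > 0, Re(x) > 0, and Re(α) > 0. Then both of the following series converge absolutely and are equal: ∑_{m=1}^∞ (2πim)^α (m+x)^(−s) e^(2πitm) = (2πi)^α ∑_{n=0}^∞ binom(α,n) (−x)^n L(t, x, s−α+n), where all complex powers are taken with the principal branch. -/

import Mathlib

open MeasureTheory

/-- The Lerch zeta function, defined by its (absolutely convergent, for `Im t > 0` and
`Re x > 0`) series, with all complex powers taken with the principal branch. -/
noncomputable def lerchZeta (t x s : ℂ) : ℂ :=
  ∑' m : ℕ, ((m : ℂ) + x) ^ (-s) * Complex.exp (2 * Real.pi * Complex.I * t * m)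

/-- The generalized binomial coefficient `binom(α, n) = α(α-1)⋯(α-n+1)/n!` for `α : ℂ`. -/
noncomputable def cbinom (α : ℂ) (n : ℕ) : ℂ :=
  (∏ j ∈ Finset.range n, (α - j)) / (n.factorial : ℂ)

/-!
For `k ∈ ℕ` write `k ^ α = (k + x) ^ α * (1 - x / (k + x)) ^ α` and expand the second factor by
the binomial series. Since `‖x‖ ≤ ‖k + x‖` the series is evaluated on the closed unit disc, where
it still converges absolutely because `Re α > 0`: Euler's limit `Γₙ(-α) → Γ(-α)` together with
`binom(α, n) (n - α) Γₙ(-α) = (-1)ⁿ n^(-α)` gives `binom(α, n) = O(n ^ (-Re α - 1))`.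
Multiplying by `(k + x) ^ (-s) e^(2πitk)` yields a double series dominated by
`∑ |binom(α, n)| · ∑ |(k + x) ^ (α - s) e^(2πitk)|`, so it may be summed in either order:
over `n` first it gives `k ^ α (k + x) ^ (-s) e^(2πitk)` (zero for `k = 0`), over `k` first the
Lerch zeta values.
-/

open Complex Filter Topology Asymptotics
open scoped Real

lemma cbinom_eq_choose (α : ℂ) (n : ℕ) : cbinom α n = Ring.choose α n := by
  rw [Ring.choose_eq_smul, ← Polynomial.aeval_eq_smeval, Polynomial.aeval_def,
    ← Polynomial.eval_map, descPochhammer_map, descPochhammer_eval_eq_prod_range, cbinom,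
    smul_eq_mul, div_eq_inv_mul]

lemma prod_range_neg_add_natCast (α : ℂ) (n : ℕ) :
    ∏ j ∈ Finset.range (n + 1), (-α + j) =
      (-1) ^ n * (∏ j ∈ Finset.range n, (α - j)) * (n - α) := by
  have : ∀ j : ℕ, -α + j = -(α - j) := fun j => by ring
  simp only [Finset.prod_range_succ, this, Finset.prod_neg, Finset.card_range]
  ring

lemma cbinom_mul_GammaSeq {α : ℂ} (hα : ∀ m : ℕ, α ≠ m) (n : ℕ) :
    cbinom α n * ((n - α) * GammaSeq (-α) n) = (-1) ^ n * (n : ℂ) ^ (-α) := by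
  have hP : ∏ j ∈ Finset.range n, (α - j) ≠ 0 :=
    Finset.prod_ne_zero_iff.2 fun j _ h => hα j (sub_eq_zero.1 h)
  have hn : (n : ℂ) - α ≠ 0 := fun h => hα n (sub_eq_zero.1 h).symm
  have hfac : (n.factorial : ℂ) ≠ 0 := by exact_mod_cast n.factorial_ne_zero
  have hsign : ((-1 : ℂ) ^ n) ^ 2 = 1 := by rw [← pow_mul, mul_comm, pow_mul]; simp
  rw [cbinom, GammaSeq, prod_range_neg_add_natCast]
  field_simp
  linear_combination -(n : ℂ) ^ (-α) * hsign

lemma isEquivalent_natCast_add (c : ℂ) :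
    (fun n : ℕ => (n : ℂ) + c) ~[atTop] fun n => (n : ℂ) :=
  IsEquivalent.refl.add_const_of_norm_tendsto_atTop <| by
    simpa [Function.comp_def] using tendsto_natCast_atTop_atTop

lemma isBigO_cbinom {α : ℂ} (hα : ∀ m : ℕ, α ≠ m) :
    cbinom α =O[atTop] fun n : ℕ => (n : ℝ) ^ (-α.re) * (n : ℝ) ^ (-1 : ℝ) := by
  have hΓ : Gamma (-α) ≠ 0 := Gamma_ne_zero fun m h => hα m (by linear_combination -h)
  have hequiv : (fun n : ℕ => ((n : ℂ) - α) * GammaSeq (-α) n) ~[atTop]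
      fun n => (n : ℂ) * Gamma (-α) := by
    have h := (isEquivalent_natCast_add (-α)).mul
      ((isEquivalent_const_iff_tendsto hΓ).2 (GammaSeq_tendsto_Gamma _))
    simpa [sub_eq_add_neg, Pi.mul_def, Function.const] using h
  have hpow : (fun n : ℕ => (-1 : ℂ) ^ n * (n : ℂ) ^ (-α)) =O[atTop]
      fun n : ℕ => (n : ℝ) ^ (-α.re) := by
    refine IsBigO.of_bound 1 ?_
    filter_upwards [eventually_gt_atTop 0] with n hn
    simpa [norm_natCast_cpow_of_pos hn] using le_abs_self _
  have hinv : (fun n : ℕ => (((n : ℂ) - α) * GammaSeq (-α) n)⁻¹) =O[atTop]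
      fun n : ℕ => (n : ℝ) ^ (-1 : ℝ) := by
    refine hequiv.inv.isBigO.trans ?_
    refine IsBigO.of_bound ‖Gamma (-α)‖⁻¹ (Eventually.of_forall fun n => ?_)
    simp [Real.rpow_neg_one, mul_comm]
  refine (hpow.mul hinv).congr' ?_ EventuallyEq.rfl
  filter_upwards [eventually_gt_atTop 0] with n hn
  have h := cbinom_mul_GammaSeq hα n
  have hD : ((n : ℂ) - α) * GammaSeq (-α) n ≠ 0 := by
    rintro hD
    rw [hD, mul_zero, eq_comm] at h
    simp [Nat.pos_iff_ne_zero.1 hn] at h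
  rw [← h, mul_inv_cancel_right₀ hD]

lemma summable_norm_cbinom {α : ℂ} (hα : 0 < α.re) : Summable fun n => ‖cbinom α n‖ := by
  by_cases hnat : ∃ m : ℕ, α = m
  · obtain ⟨m, rfl⟩ := hnat
    refine summable_of_ne_finset_zero (s := Finset.range (m + 1)) fun n hn => ?_
    rw [cbinom_eq_choose, Ring.choose_natCast,
      Nat.choose_eq_zero_of_lt (by simpa [Nat.lt_succ_iff] using hn)]
    simp
  push Not at hnat
  refine summable_of_isBigO_nat' ?_ (isBigO_cbinom hnat).norm_left
  refine (Real.summable_nat_rpow.2 (by linarith : -α.re + -1 < -1)).congr fun n => ?_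
  exact Real.rpow_add' (Nat.cast_nonneg n) (by linarith)

lemma hasSum_cbinom_mul_pow_of_norm_lt_one (α : ℂ) {z : ℂ} (hz : ‖z‖ < 1) :
    HasSum (fun n => cbinom α n * z ^ n) ((1 + z) ^ α) := by
  have hz' : z ∈ Metric.eball (0 : ℂ) 1 := by
    rw [← ENNReal.ofReal_one, Metric.eball_ofReal]
    simpa using hz
  have h := (one_add_cpow_hasFPowerSeriesOnBall_zero (a := α)).hasSum hz'
  simpa [binomialSeries, FormalMultilinearSeries.coeff_ofScalars, cbinom_eq_choose, mul_comm]
    using h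

lemma hasSum_cbinom_mul_pow {α : ℂ} (hα : 0 < α.re) {z : ℂ} (hz : ‖z‖ ≤ 1) :
    HasSum (fun n => cbinom α n * z ^ n) ((1 + z) ^ α) := by
  have hbound : ∀ n, ∀ w ∈ Metric.closedBall (0 : ℂ) 1, ‖cbinom α n * w ^ n‖ ≤ ‖cbinom α n‖ :=
    fun n w hw => by
      rw [norm_mul, norm_pow]
      exact mul_le_of_le_one_right (norm_nonneg _)
        (pow_le_one₀ (norm_nonneg _) (by simpa using hw))
  have hsum_cont : ContinuousOn (fun w => ∑' n, cbinom α n * w ^ n) (Metric.closedBall 0 1) :=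
    continuousOn_tsum (fun n => by fun_prop) (summable_norm_cbinom hα) hbound
  have hpow_cont : ContinuousOn (fun w : ℂ => (1 + w) ^ α) (Metric.closedBall 0 1) := by
    intro w hw
    have hre : 0 ≤ (1 + w).re := by
      have := (abs_re_le_norm w).trans (by simpa using hw)
      simp only [add_re, one_re]
      linarith [neg_abs_le w.re]
    exact ((continuousAt_cpow_const_of_re_pos (Or.inl hre) hα).comp
      (continuousAt_const.add continuousAt_id)).continuousWithinAt
  have heq : Set.EqOn (fun w => ∑' n, cbinom α n * w ^ n) (fun w => (1 + w) ^ α)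
      (Metric.closedBall 0 1) :=
    Set.EqOn.of_subset_closure
      (fun w hw => (hasSum_cbinom_mul_pow_of_norm_lt_one α (by simpa using hw)).tsum_eq)
      hsum_cont hpow_cont Metric.ball_subset_closedBall (closure_ball 0 one_ne_zero).ge
  have hmem : z ∈ Metric.closedBall (0 : ℂ) 1 := by simpa using hz
  rw [← show (∑' n, cbinom α n * z ^ n) = (1 + z) ^ α from heq hmem]
  exact (Summable.of_norm_bounded (summable_norm_cbinom hα) (hbound · z hmem)).hasSum

lemma ofReal_mul_cpow {r : ℝ} (hr : 0 ≤ r) (z s : ℂ) :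
    ((r : ℂ) * z) ^ s = (r : ℂ) ^ s * z ^ s := by
  rcases hr.eq_or_lt with rfl | hr
  · rcases eq_or_ne s 0 with rfl | hs <;> simp [*]
  rcases eq_or_ne z 0 with rfl | hz
  · rcases eq_or_ne s 0 with rfl | hs <;> simp [*]
  have hr0 : (r : ℂ) ≠ 0 := ofReal_ne_zero.2 hr.ne'
  rw [cpow_def_of_ne_zero (mul_ne_zero hr0 hz), cpow_def_of_ne_zero hr0, cpow_def_of_ne_zero hz,
    log_ofReal_mul hr hz, ← ofReal_log hr.le, add_mul, exp_add]

lemma isBigO_natCast_add_cpow (x b : ℂ) :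
    (fun n : ℕ => ((n : ℂ) + x) ^ b) =O[atTop] fun n => ((n ^ ⌈b.re⌉₊ : ℕ) : ℂ) := by
  have hnorm : (fun n : ℕ => ‖(n : ℂ) + x‖ ^ b.re) =O[atTop] fun n : ℕ => (n : ℝ) ^ b.re := by
    have h := (isEquivalent_natCast_add x).isTheta.norm_left.norm_right
    simp only [norm_natCast] at h
    exact (h.rpow (Eventually.of_forall fun _ => norm_nonneg _)
      (Eventually.of_forall fun _ => Nat.cast_nonneg _)).isBigO
  refine (isBigO_cpow_rpow isBoundedUnder_const).trans (hnorm.trans (IsBigO.of_bound 1 ?_))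
  filter_upwards [eventually_ge_atTop 1] with n hn
  have hn' : (1 : ℝ) ≤ n := by exact_mod_cast hn
  rw [Real.norm_of_nonneg (by positivity), one_mul, Nat.cast_pow, norm_pow, norm_natCast,
    ← Real.rpow_natCast]
  exact Real.rpow_le_rpow_of_exponent_le hn' (Nat.le_ceil _)

lemma summable_norm_natCast_add_cpow_mul_exp {t : ℂ} (ht : 0 < t.im) (x b : ℂ) :
    Summable fun n : ℕ => ‖((n : ℂ) + x) ^ b * cexp (2 * π * I * t * n)‖ := by
  have hr : ‖cexp (2 * π * I * t)‖ < 1 := by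
    rw [norm_exp, Real.exp_lt_one_iff, show (2 * π * I * t).re = -(2 * π * t.im) by simp,
      neg_lt_zero]
    positivity
  refine (summable_norm_mul_geometric_of_norm_lt_one' hr (isBigO_natCast_add_cpow x b)).congr
    fun n => ?_
  rw [← exp_nat_mul, mul_comm (n : ℂ)]

lemma norm_le_norm_natCast_add {x : ℂ} (hx : 0 ≤ x.re) (k : ℕ) : ‖x‖ ≤ ‖(k : ℂ) + x‖ := by
  have hk : (0 : ℝ) ≤ k := k.cast_nonneg
  rw [← sq_le_sq₀ (norm_nonneg _) (norm_nonneg _), Complex.sq_norm, Complex.sq_norm, normSq_apply,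
    normSq_apply]
  simp only [add_re, add_im, natCast_re, natCast_im, zero_add]
  nlinarith

lemma norm_neg_div_natCast_add_le_one {x : ℂ} (hx : 0 ≤ x.re) (k : ℕ) : ‖-x / (k + x)‖ ≤ 1 := by
  rw [norm_div, norm_neg]
  exact div_le_one_of_le₀ (norm_le_norm_natCast_add hx k) (norm_nonneg _)

lemma natCast_add_mem_slitPlane {x : ℂ} (hx : 0 < x.re) (k : ℕ) : (k : ℂ) + x ∈ slitPlane :=
  Or.inl (by simp only [add_re, natCast_re]; positivity)

noncomputable def lerchBinomialTerm (t x s α : ℂ) (k n : ℕ) : ℂ :=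
  cbinom α n * (-x) ^ n * ((k : ℂ) + x) ^ (α - s - n) * cexp (2 * π * I * t * k)

section LerchBinomialTerm

variable {t x : ℂ} (s α : ℂ)

lemma lerchBinomialTerm_eq (hx : 0 < x.re) (k n : ℕ) :
    lerchBinomialTerm t x s α k n =
      ((k : ℂ) + x) ^ (α - s) * cexp (2 * π * I * t * k) * (cbinom α n * (-x / (k + x)) ^ n) := by
  rw [lerchBinomialTerm, cpow_sub _ _ (slitPlane_ne_zero (natCast_add_mem_slitPlane hx k)),
    cpow_natCast, div_pow]
  ring

lemma summable_lerchBinomialTerm (ht : 0 < t.im) (hx : 0 < x.re) (hα : 0 < α.re) :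
    Summable (Function.uncurry (lerchBinomialTerm t x s α)) := by
  refine Summable.of_norm_bounded
    ((summable_norm_natCast_add_cpow_mul_exp ht x (α - s)).mul_of_nonneg (summable_norm_cbinom hα)
      (fun _ => norm_nonneg _) (fun _ => norm_nonneg _)) fun ⟨k, n⟩ => ?_
  rw [Function.uncurry_apply_pair, lerchBinomialTerm_eq s α hx, norm_mul _ (cbinom α n * _),
    norm_mul (cbinom α n), norm_pow]
  exact mul_le_mul_of_nonneg_left (mul_le_of_le_one_right (norm_nonneg _)
    (pow_le_one₀ (norm_nonneg _) (norm_neg_div_natCast_add_le_one hx.le k))) (norm_nonneg _)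

lemma hasSum_lerchBinomialTerm_row (hx : 0 < x.re) (hα : 0 < α.re) (k : ℕ) :
    HasSum (lerchBinomialTerm t x s α k)
      ((k : ℂ) ^ α * ((k : ℂ) + x) ^ (-s) * cexp (2 * π * I * t * k)) := by
  have hkx := natCast_add_mem_slitPlane hx k
  have hne := slitPlane_ne_zero hkx
  have h1z : 1 + -x / (k + x) = ((k : ℝ) : ℂ) * ((k : ℂ) + x)⁻¹ := by
    field_simp
    push_cast
    ring
  have hval : ((k : ℂ) + x) ^ (α - s) * cexp (2 * π * I * t * k) * (1 + -x / (k + x)) ^ α =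
      (k : ℂ) ^ α * ((k : ℂ) + x) ^ (-s) * cexp (2 * π * I * t * k) := by
    have hpow : ((k : ℂ) + x) ^ α ≠ 0 := cpow_ne_zero_iff.2 (Or.inl hne)
    rw [h1z, ofReal_mul_cpow k.cast_nonneg, inv_cpow _ _ (slitPlane_arg_ne_pi hkx), ofReal_natCast,
      sub_eq_add_neg, cpow_add _ _ hne]
    field_simp
  rw [funext (lerchBinomialTerm_eq s α hx k), ← hval]
  exact (hasSum_cbinom_mul_pow hα (norm_neg_div_natCast_add_le_one hx.le k)).mul_left _

lemma tsum_lerchBinomialTerm_col (n : ℕ) :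
    ∑' k, lerchBinomialTerm t x s α k n = cbinom α n * (-x) ^ n * lerchZeta t x (s - α + n) := by
  rw [lerchZeta, ← tsum_mul_left]
  refine tsum_congr fun k => ?_
  rw [lerchBinomialTerm, show -(s - α + n) = α - s - n by ring]
  ring

lemma summable_cbinom_mul_lerchZeta (ht : 0 < t.im) (hx : 0 < x.re) (hα : 0 < α.re) :
    Summable fun n : ℕ => cbinom α n * (-x) ^ n * lerchZeta t x (s - α + n) := by
  refine ((summable_lerchBinomialTerm s α ht hx hα).prod_symm.prod).congr fun n => ?_
  exact tsum_lerchBinomialTerm_col s α n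

lemma hasSum_natCast_cpow_mul_lerchZeta (ht : 0 < t.im) (hx : 0 < x.re) (hα : 0 < α.re) :
    HasSum (fun k : ℕ => (k : ℂ) ^ α * ((k : ℂ) + x) ^ (-s) * cexp (2 * π * I * t * k))
      (∑' n : ℕ, cbinom α n * (-x) ^ n * lerchZeta t x (s - α + n)) := by
  have hT := summable_lerchBinomialTerm s α ht hx hα
  have hrow := hasSum_lerchBinomialTerm_row (t := t) s α hx hα
  have h := hT.hasSum.prod_fiberwise hrow
  rwa [hT.tsum_prod_uncurry fun k => (hrow k).summable, ← hT.tsum_comm,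
    tsum_congr (tsum_lerchBinomialTerm_col s α)] at h

end LerchBinomialTerm

theorem rl_fracderiv_lerch_t (t x s α : ℂ) (ht : 0 < t.im) (hx : 0 < x.re)
    (hα : 0 < α.re) :
    Summable (fun m : ℕ =>
      (2 * Real.pi * Complex.I * ((m : ℂ) + 1)) ^ α * (((m : ℂ) + 1) + x) ^ (-s) *
        Complex.exp (2 * Real.pi * Complex.I * t * ((m : ℂ) + 1))) ∧
    Summable (fun n : ℕ => cbinom α n * (-x) ^ n * lerchZeta t x (s - α + n)) ∧
    (∑' m : ℕ,
      (2 * Real.pi * Complex.I * ((m : ℂ) + 1)) ^ α * (((m : ℂ) + 1) + x) ^ (-s) *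
        Complex.exp (2 * Real.pi * Complex.I * t * ((m : ℂ) + 1)))
      = (2 * Real.pi * Complex.I) ^ α *
        ∑' n : ℕ, cbinom α n * (-x) ^ n * lerchZeta t x (s - α + n) := by
  have hα0 : α ≠ 0 := fun h => by simp [h] at hα
  have h := hasSum_natCast_cpow_mul_lerchZeta s α ht hx hα
  rw [← hasSum_nat_add_iff' 1] at h
  simp only [Finset.range_one, Finset.sum_singleton, Nat.cast_zero, zero_cpow hα0, zero_mul,
    sub_zero, Nat.cast_add, Nat.cast_one] at h
  have hterm : ∀ m : ℕ, (2 * π * I * ((m : ℂ) + 1)) ^ α * ((m : ℂ) + 1 + x) ^ (-s) *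
      cexp (2 * π * I * t * ((m : ℂ) + 1)) = (2 * π * I) ^ α *
        (((m : ℂ) + 1) ^ α * ((m : ℂ) + 1 + x) ^ (-s) * cexp (2 * π * I * t * ((m : ℂ) + 1))) := by
    intro m
    have h2πI := ofReal_mul_cpow (r := m + 1) (by positivity) (2 * π * I) α
    push_cast at h2πI
    rw [mul_comm (2 * π * I : ℂ), h2πI]
    ring
  have hL := h.mul_left ((2 * π * I) ^ α)
  simp only [← hterm] at hL
  exact ⟨hL.summable, summable_cbinom_mul_lerchZeta s α ht hx hα, hL.tsum_eq⟩
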